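/- arXiv:math/0304382 — 2 statements merged into one kernel-verified Lean document; each statement's English description precedes it below -/
import Mathlib

section
/- Let r, m, s be positive integers and set q(t) = t + t(t−1)·z′(t)/(r·z(t)). Then on any open interval of real numbers t with t ∉ {0,1} on which z(t) ≠ 0, the function q satisfies the Riccati equation q′ = (1/(t(t−1)))·((b₄−b₃)q² + (2b₁t + b₂ − b₄ − 1)q − (b₁+b₂)t). -/
/-!
The polynomial `z = ₂F₁(r, -m; s; t)` solves Gauss's hypergeometric equation
`t(1 - t) z'' + (s - (r - m + 1) t) z' + r m z = 0`: comparing coefficients of `tⁿ`, this is the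
two-term recurrence `(n + 1)(s + n) cₙ₊₁ + (r + n)(m - n) cₙ = 0` satisfied by the coefficients
`cₙ` of `z`. The logarithmic-derivative substitution `q = t + t(t - 1) w' / (r w)` turns any
solution `w` of this linear second-order equation into a solution of the Riccati equation, wherever
`t(t - 1) r w ≠ 0`.
-/

open Polynomial Finset

/-- `z(t) = Σ_{j=0}^m (−1)^j (C(r+j−1,j)·C(m,j)/C(s+j−1,j)) t^j`, the terminating
hypergeometric polynomial `₂F₁(r, −m; s; t)`. -/
noncomputable def z (r m s : ℕ) : Polynomial ℚ :=
  ∑ j ∈ range (m + 1),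
    C ((-1 : ℚ) ^ j * (Nat.choose (r + j - 1) j : ℚ) * (Nat.choose m j : ℚ)
        / (Nat.choose (s + j - 1) j : ℚ)) * X ^ j

/-- `z` evaluated as a real function. -/
noncomputable def zf (r m s : ℕ) : ℝ → ℝ := fun t => aeval t (z r m s)

/-- `z′` evaluated as a real function. -/
noncomputable def zf' (r m s : ℕ) : ℝ → ℝ := fun t => aeval t (derivative (z r m s))

/-- The seed solution `q(t) = t + t(t−1)z′(t)/(r·z(t))`. -/
noncomputable def qseed (r m s : ℕ) : ℝ → ℝ :=
  fun t => t + t * (t - 1) * zf' r m s t / ((r : ℝ) * zf r m s t)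

theorem Nat.cast_add_choose_succ_mul {R : Type*} [CommSemiring R] (a n : ℕ) :
    ((a + n).choose (n + 1) : R) * (n + 1) = ((a : R) + n) * (a + n - 1).choose n := by
  rcases Nat.eq_zero_or_pos a with rfl | ha
  · rcases n with _ | n <;> simp
  · have h := Nat.add_one_mul_choose_eq (a + n - 1) n
    rw [Nat.sub_add_cancel (by omega)] at h
    exact_mod_cast congrArg (Nat.cast (R := R)) h.symm

theorem Nat.cast_choose_succ_mul {R : Type*} [CommRing R] (m n : ℕ) :
    (m.choose (n + 1) : R) * (n + 1) = m.choose n * ((m : R) - n) := by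
  rcases lt_or_ge m n with h | h
  · simp [Nat.choose_eq_zero_of_lt h, Nat.choose_eq_zero_of_lt (Nat.lt_succ_of_lt h)]
  · rw [← Nat.cast_sub h]
    exact_mod_cast congrArg (Nat.cast (R := R)) (Nat.choose_succ_right_eq m n)

noncomputable def zCoeff (r m s n : ℕ) : ℚ :=
  (-1 : ℚ) ^ n * (Nat.choose (r + n - 1) n : ℚ) * (Nat.choose m n : ℚ)
      / (Nat.choose (s + n - 1) n : ℚ)

theorem coeff_z (r m s n : ℕ) : (z r m s).coeff n = zCoeff r m s n := by
  rw [z, finsetSum_coeff]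
  simp only [coeff_C_mul, coeff_X_pow, mul_ite, mul_one, mul_zero, Finset.sum_ite_eq, mem_range]
  split_ifs with h
  · rfl
  · simp [zCoeff, Nat.choose_eq_zero_of_lt (by omega : m < n)]

theorem zCoeff_succ (r m s n : ℕ) (hs : 0 < s) :
    ((n : ℚ) + 1) * ((s : ℚ) + n) * zCoeff r m s (n + 1)
      + ((r : ℚ) + n) * ((m : ℚ) - n) * zCoeff r m s n = 0 := by
  have hn : ((n : ℚ) + 1) ≠ 0 := by positivity
  have hden : ((s + n - 1).choose n : ℚ) ≠ 0 := by
    exact_mod_cast (Nat.choose_pos (by omega)).ne'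
  have hr := Nat.cast_add_choose_succ_mul (R := ℚ) r n
  have hm := Nat.cast_choose_succ_mul (R := ℚ) m n
  have hs' := Nat.cast_add_choose_succ_mul (R := ℚ) s n
  rw [zCoeff, zCoeff, show r + (n + 1) - 1 = r + n by omega, show s + (n + 1) - 1 = s + n by omega,
    eq_div_of_mul_eq hn hr, eq_div_of_mul_eq hn hm, eq_div_of_mul_eq hn hs']
  field_simp
  ring

theorem z_hypergeometric_ode (r m s : ℕ) (hs : 0 < s) :
    X * (1 - X) * derivative (derivative (z r m s))
      + (C (s : ℚ) - X * C ((r : ℚ) - m + 1)) * derivative (z r m s)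
      + C ((r : ℚ) * m) * z r m s = 0 := by
  ext n
  have h := zCoeff_succ r m s n hs
  rcases n with _ | _ | n <;>
  · simp only [mul_one_sub, sub_mul, mul_assoc, coeff_add, coeff_sub, coeff_C_mul, coeff_X_mul,
      coeff_X_mul_zero, coeff_derivative, coeff_z, coeff_zero]
    push_cast at h ⊢
    linear_combination h

theorem hasDerivAt_riccati_of_hypergeometric_ode {w w' q : ℝ → ℝ} {w'' t r m s : ℝ}
    (hw : HasDerivAt w (w' t) t) (hw' : HasDerivAt w' w'' t)
    (ht₀ : t ≠ 0) (ht₁ : t ≠ 1) (hr : r ≠ 0) (hwt : w t ≠ 0)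
    (hode : t * (1 - t) * w'' + (s - t * (r - m + 1)) * w' t + r * m * w t = 0)
    (hq : ∀ u, q u = u + u * (u - 1) * w' u / (r * w u)) :
    HasDerivAt q ((-r * q t ^ 2 + ((m + r + 1) * t + s - 1) * q t - (m + s) * t)
      / (t * (t - 1))) t := by
  have hq' := (hasDerivAt_id' t).fun_add ((((hasDerivAt_id' t).fun_mul
    ((hasDerivAt_id' t).sub_const 1)).fun_mul hw').fun_div (hw.const_mul r) (mul_ne_zero hr hwt))
  refine (hq'.congr_of_eventuallyEq (Filter.Eventually.of_forall hq)).congr_deriv ?_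
  have ht₁' : t - 1 ≠ 0 := sub_ne_zero.mpr ht₁
  rw [hq t]
  field_simp
  linear_combination (1 - t) * w t * hode

theorem zf_hypergeometric_ode (r m s : ℕ) (hs : 0 < s) (t : ℝ) :
    t * (1 - t) * aeval t (derivative (derivative (z r m s)))
      + (s - t * ((r : ℝ) - m + 1)) * zf' r m s t + (r : ℝ) * m * zf r m s t = 0 := by
  simpa [zf, zf'] using congrArg (aeval t) (z_hypergeometric_ode r m s hs)

theorem statement2_general (r m s : ℕ) (hr : 0 < r) (hs : 0 < s) (a b : ℝ)
    (hI : ∀ t ∈ Set.Ioo a b, t ≠ 0 ∧ t ≠ 1 ∧ zf r m s t ≠ 0) :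
    let b₁ : ℝ := ((m : ℝ) + r + 1) / 2
    let b₂ : ℝ := ((m : ℝ) - r + 2 * s - 1) / 2
    let b₃ : ℝ := ((r : ℝ) + m - 1) / 2
    let b₄ : ℝ := ((m : ℝ) - r - 1) / 2
    ∀ t ∈ Set.Ioo a b,
      HasDerivAt (qseed r m s)
        ((1 / (t * (t - 1))) *
          ((b₄ - b₃) * (qseed r m s t) ^ 2 + (2 * b₁ * t + b₂ - b₄ - 1) * qseed r m s t
            - (b₁ + b₂) * t)) t := by
  intro b₁ b₂ b₃ b₄ t ht
  obtain ⟨ht₀, ht₁, hzt⟩ := hI t ht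
  have hq := hasDerivAt_riccati_of_hypergeometric_ode (q := qseed r m s)
    ((z r m s).hasDerivAt_aeval t) ((derivative (z r m s)).hasDerivAt_aeval t) ht₀ ht₁
    (Nat.cast_ne_zero.mpr hr.ne') hzt (zf_hypergeometric_ode r m s hs t) fun _ ↦ rfl
  refine hq.congr_deriv ?_
  simp only [b₁, b₂, b₃, b₄]
  ring

/-- On any open interval avoiding `0, 1` on which `z` does not vanish, the seed solution
`q(t) = t + t(t−1)z′/(r z)` satisfies the Riccati equation
`q′ = (1/(t(t−1)))((b₄−b₃)q² + (2b₁t+b₂−b₄−1)q − (b₁+b₂)t)`. -/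
theorem statement2 (r m s : ℕ) (hr : 0 < r) (hm : 0 < m) (hs : 0 < s) (a b : ℝ)
    (hI : ∀ t ∈ Set.Ioo a b, t ≠ 0 ∧ t ≠ 1 ∧ zf r m s t ≠ 0) :
    let b₁ : ℝ := ((m : ℝ) + r + 1) / 2
    let b₂ : ℝ := ((m : ℝ) - r + 2 * s - 1) / 2
    let b₃ : ℝ := ((r : ℝ) + m - 1) / 2
    let b₄ : ℝ := ((m : ℝ) - r - 1) / 2
    ∀ t ∈ Set.Ioo a b,
      HasDerivAt (qseed r m s)
        ((1 / (t * (t - 1))) *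
          ((b₄ - b₃) * (qseed r m s t) ^ 2 + (2 * b₁ * t + b₂ - b₄ - 1) * qseed r m s t
            - (b₁ + b₂) * t)) t :=
  statement2_general r m s hr hs a b hI
end

section
/- Let m, r be positive integers, set s = r + 2, and let (T_n) and (S_n) be sequences of nonzero polynomials in ℚ[t] with T₁ = 1, T₂ = W(r,m,s), S₁ = 1, S₂ = W(r−1,m+1,s−1), satisfying T_{n+1}T_{n−1} = (t²−t)(T_nT_n″ − (T_n′)²) + (2t−1)T_nT_n′ + (n−1)(n+r)T_n² and S_{n+1}S_{n−1} = (t²−t)(S_nS_n″ − (S_n′)²) + (2t−1)S_nS_n′ + (n−1)(n+r−1)S_n² for all n ≥ 2. Then for every n ≥ 2, (t−1)^{m(n−2)} divides T_n with quotient of degree m, and (t−1)^{(m+1)(n−2)} divides S_n with quotient of degree m+1. -/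
/-!
With `D_c(p) = (t² − t)(p p″ − p′²) + (2t − 1) p p′ + c p²`, both `τ = T` (with `M = m`) and
`τ = S` (with `M = m + 1`) satisfy `τₙ₊₁ τₙ₋₁ = D_{cₙ}(τₙ)` with `cₙ > 0`. The coefficient of
`t^{2 deg p}` in `D_c(p)` is `(deg p + c) · lc(p)²`, so `deg τₙ = M (n − 1)`.
Since `(t − 1)^a ∣ p` implies `(t − 1)^{2a} ∣ D_c(p)`, the multiplicities `aₙ` of the root `1`
satisfy `aₙ₊₁ + aₙ₋₁ ≥ 2 aₙ`; together with `a₂ = 0` and `a₃ ≥ M` this forces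
`aₙ ≥ M (n − 2)`, and the quotient has degree `M (n − 1) − M (n − 2) = M`.

The two inputs `a₂ = 0` and `a₃ ≥ M`, for `τ₂ = W(ρ, M, ρ + 2)`, come from the Euler-type identity
`t W′ + (ρ + 2) W = κ (t − 1)^M`, a binomial identity coefficientwise. Writing `L = t p′ + b p`,
`t · D_b(p)` is a combination of `(t − 1) L′`, `L` and `L²`, all divisible by `(t − 1)^M`, which
gives `(t − 1)^M ∣ τ₃`. And if `1` were a root of `W` of multiplicity `a`, then `a ≤ M` and
`(t − 1)^a` would divide `t W′ = L − (ρ + 2) W`, although `1` is a root of `W′` of multiplicity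
`a − 1`.
-/

open Polynomial Finset

noncomputable def W (r m s : ℕ) : Polynomial ℚ :=
  ∑ j ∈ range (m + 1),
    C ((-1 : ℚ) ^ j * (Nat.choose (r + m + 1 - j) (m - j) : ℚ) * (Nat.choose (s + m) j : ℚ))
      * X ^ (m - j)

lemma Nat.add_mul_le_of_two_mul_le_add {a : ℕ → ℕ} {M : ℕ} (h₁ : a 0 + M ≤ a 1)
    (h : ∀ n, 2 * a (n + 1) ≤ a (n + 2) + a n) (n : ℕ) : a 0 + M * n ≤ a n := by
  have hinc : ∀ n, a n + M ≤ a (n + 1) := by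
    intro n
    induction n with
    | zero => exact h₁
    | succ n ih => show a (n + 1) + M ≤ a (n + 2); have := h n; omega
  induction n with
  | zero => simp
  | succ n ih => have := hinc n; rw [Nat.mul_succ]; omega

section Polynomial

variable {R : Type*}

lemma coeff_X_mul_derivative [CommSemiring R] (p : R[X]) (k : ℕ) :
    (X * derivative p).coeff k = k * p.coeff k := by
  rcases k with _ | k
  · simp
  · rw [coeff_X_mul, coeff_derivative]
    push_cast
    ring

lemma natDegree_X_mul_derivative_le [CommSemiring R] (p : R[X]) :
    (X * derivative p).natDegree ≤ p.natDegree :=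
  natDegree_le_iff_coeff_eq_zero.mpr fun k hk => by
    rw [coeff_X_mul_derivative, coeff_eq_zero_of_natDegree_lt hk, mul_zero]

variable [CommRing R]

lemma isCoprime_X_sub_one_pow_X (n : ℕ) : IsCoprime ((X - 1 : R[X]) ^ n) X :=
  IsCoprime.pow_left ⟨-1, 1, by ring⟩

lemma X_sub_one_pow_dvd_iff [IsDomain R] {p : R[X]} (hp : p ≠ 0) (n : ℕ) :
    (X - 1) ^ n ∣ p ↔ n ≤ p.rootMultiplicity 1 := by
  rw [le_rootMultiplicity_iff hp, C_1]

lemma natDegree_X_sub_one [Nontrivial R] : (X - 1 : R[X]).natDegree = 1 := by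
  compute_degree!

/-- `todaRhs c p = p² · (((t² − t) p′ / p)′ + c)`. -/
noncomputable def todaRhs (c : R) (p : R[X]) : R[X] :=
  (X ^ 2 - X) * (p * derivative (derivative p) - derivative p ^ 2)
    + (2 * X - 1) * (p * derivative p) + C c * p ^ 2

namespace todaRhs

lemma X_sub_one_pow_mul (c : R) (a : ℕ) (u : R[X]) :
    todaRhs c ((X - 1) ^ a * u) = (X - 1) ^ (2 * a) * (todaRhs c u + C (a : R) * u ^ 2) := by
  induction a with
  | zero => simp
  | succ a ih =>
    have one_factor : ∀ v : R[X],
        todaRhs c ((X - 1) * v) = (X - 1) ^ 2 * (todaRhs c v + v ^ 2) := by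
      intro v
      simp only [todaRhs, derivative_mul, derivative_sub, derivative_add, derivative_X,
        derivative_one, sub_zero, one_mul]
      ring
    rw [pow_succ', mul_assoc, one_factor, ih, Nat.cast_succ, C_add, C_1]
    ring

lemma pow_two_mul_dvd (c : R) {a : ℕ} {p : R[X]} (h : (X - 1) ^ a ∣ p) :
    (X - 1) ^ (2 * a) ∣ todaRhs c p := by
  obtain ⟨u, rfl⟩ := h
  rw [X_sub_one_pow_mul]
  exact dvd_mul_right _ _

-- Written with `θ = t d/dt`, which does not raise degrees, each term is a polynomial of degree
-- at most one times a product of two polynomials of degree at most `deg p`.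
lemma X_mul_eq (c : R) (p : R[X]) :
    X * todaRhs c p = (X - 1) * (p * (X * derivative (X * derivative p)))
      + X * (p * (X * derivative p)) + (1 - X) * ((X * derivative p) * (X * derivative p))
      + C c * X * (p * p) := by
  simp only [todaRhs, derivative_mul, derivative_X, one_mul]
  ring

lemma natDegree_X_mul_le (c : R) (p : R[X]) :
    (X * todaRhs c p).natDegree ≤ 1 + (p.natDegree + p.natDegree) := by
  have hθp := natDegree_X_mul_derivative_le p
  have hθθp := (natDegree_X_mul_derivative_le (X * derivative p)).trans hθp
  rw [X_mul_eq]
  refine natDegree_add_le_of_degree_le (natDegree_add_le_of_degree_le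
    (natDegree_add_le_of_degree_le ?_ ?_) ?_) ?_ <;>
  refine natDegree_mul_le_of_le (by compute_degree) (natDegree_mul_le_of_le ?_ ?_) <;>
  first | assumption | exact le_rfl

lemma coeff_X_mul_top (c : R) (p : R[X]) :
    (X * todaRhs c p).coeff (1 + (p.natDegree + p.natDegree))
      = (p.natDegree + c) * p.leadingCoeff ^ 2 := by
  set d := p.natDegree
  have hp : p.natDegree ≤ d := le_rfl
  have hθp := natDegree_X_mul_derivative_le p
  have hθθp := (natDegree_X_mul_derivative_le (X * derivative p)).trans hθp
  have hcoeff {f g h : R[X]} (hf : f.natDegree ≤ 1) (hg : g.natDegree ≤ d) (hh : h.natDegree ≤ d) :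
      (f * (g * h)).coeff (1 + (d + d)) = f.coeff 1 * (g.coeff d * h.coeff d) := by
    rw [coeff_mul_add_eq_of_natDegree_le hf (natDegree_mul_le_of_le hg hh),
      coeff_mul_add_eq_of_natDegree_le hg hh]
  rw [X_mul_eq, coeff_add, coeff_add, coeff_add,
    hcoeff (by compute_degree) hp hθθp, hcoeff natDegree_X_le hp hθp,
    hcoeff (by compute_degree) hθp hθp, hcoeff (by compute_degree) hp hp,
    coeff_X_mul_derivative, coeff_X_mul_derivative, coeff_natDegree]
  simp only [coeff_sub, coeff_one, coeff_X_one, coeff_C_mul]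
  norm_num
  ring

lemma natDegree_eq [IsDomain R] (c : R) {p : R[X]} (hp : p ≠ 0)
    (hc : (p.natDegree : R) + c ≠ 0) :
    (todaRhs c p).natDegree = 2 * p.natDegree := by
  have hne : (X * todaRhs c p).coeff (1 + (p.natDegree + p.natDegree)) ≠ 0 := by
    rw [coeff_X_mul_top]
    exact mul_ne_zero hc (pow_ne_zero 2 (leadingCoeff_ne_zero.mpr hp))
  have hX := natDegree_eq_of_le_of_coeff_ne_zero (natDegree_X_mul_le c p) hne
  have hD : todaRhs c p ≠ 0 := by
    rintro hD
    rw [hD, mul_zero, coeff_zero] at hne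
    exact hne rfl
  rw [natDegree_X_mul hD] at hX
  omega

end todaRhs

noncomputable def euler (b : R) (p : R[X]) : R[X] := X * derivative p + C b * p

lemma todaRhs.X_mul_eq_euler (b : R) (p : R[X]) :
    X * todaRhs b p = X * p * ((X - 1) * derivative (euler b p)) - (X - 1) * euler b p ^ 2
      + ((C b + 1) * (X - 1) + 1) * euler b p * p := by
  simp only [todaRhs, euler, derivative_add, derivative_mul, derivative_X, derivative_C, one_mul,
    zero_mul, zero_add]
  ring

lemma X_sub_one_pow_dvd_todaRhs {p : R[X]} {b κ : R} {M : ℕ}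
    (h : euler b p = C κ * (X - 1) ^ M) : (X - 1) ^ M ∣ todaRhs b p := by
  have hL' : (X - 1) * derivative (euler b p) = C (κ * M) * (X - 1) ^ M := by
    rw [h, derivative_C_mul, derivative_pow]
    rcases M with _ | M
    · simp
    · simp only [derivative_sub, derivative_X, derivative_one, sub_zero, mul_one,
        Nat.add_sub_cancel, C_mul]
      ring
  refine (isCoprime_X_sub_one_pow_X M).dvd_of_dvd_mul_left ⟨X * p * C (κ * M)
    - C κ ^ 2 * (X - 1) ^ (M + 1) + ((C b + 1) * (X - 1) + 1) * C κ * p, ?_⟩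
  rw [todaRhs.X_mul_eq_euler, hL', h]
  ring

lemma eval_one_ne_zero_of_X_sub_one_pow_dvd_euler [IsDomain R] [CharZero R] {p : R[X]} {b : R}
    (hp : p ≠ 0) (hdvd : (X - 1) ^ p.natDegree ∣ euler b p) :
    p.eval 1 ≠ 0 := by
  intro hroot
  set a := p.rootMultiplicity 1
  have hpa : (X - 1) ^ a ∣ p := (X_sub_one_pow_dvd_iff hp a).mpr le_rfl
  have ha_pos : 0 < a := (rootMultiplicity_pos hp).mpr hroot
  have ha_le : a ≤ p.natDegree := by
    simpa [natDegree_X_sub_one] using natDegree_le_of_dvd hpa hp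
  have hder : (X - 1) ^ a ∣ derivative p := by
    refine (isCoprime_X_sub_one_pow_X a).dvd_of_dvd_mul_left ?_
    have := (pow_dvd_pow _ ha_le).trans hdvd
    simpa [euler] using dvd_sub this (hpa.mul_left (C b))
  have hder0 : derivative p ≠ 0 := by
    intro h0
    rw [derivative_eq_zero.mp h0] at ha_le
    omega
  have := (X_sub_one_pow_dvd_iff hder0 a).mp hder
  rw [derivative_rootMultiplicity_of_root hroot] at this
  omega

end Polynomial

lemma Nat.add_choose_mul_add_choose (n k M : ℕ) (hk : k ≤ M) :
    (n + k).choose k * (n + M).choose (M - k) = (n + M).choose M * M.choose k := by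
  calc (n + k).choose k * (n + M).choose (M - k)
      = (n + M).choose (n + k) * (n + k).choose k := by
        rw [mul_comm, Nat.choose_symm_of_eq_add (by omega : n + M = (M - k) + (n + k))]
    _ = (n + M).choose k * (n + M - k).choose (M - k) := by
        rw [Nat.choose_mul (by omega), Nat.add_sub_cancel,
          Nat.choose_symm_of_eq_add (by omega : n + M - k = n + (M - k))]
    _ = (n + M).choose M * M.choose k := (Nat.choose_mul hk).symm

lemma Nat.add_one_mul_choose_mul_choose (a k M : ℕ) (hk : k ≤ M) :
    (k + a + 1) * (a + k).choose k * (a + 1 + M).choose (M - k)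
      = (a + 1) * ((a + 1 + M).choose M * M.choose k) := by
  have h := Nat.choose_mul_succ_eq (a + k) k
  rw [show a + k + 1 - k = a + 1 by omega, show a + k + 1 = a + 1 + k by omega] at h
  rw [← Nat.add_choose_mul_add_choose _ _ _ hk, ← mul_assoc, mul_comm (a + 1), ← h]
  ring

lemma coeff_W (ρ M s k : ℕ) :
    (W ρ M s).coeff k = if k ≤ M then
      (-1) ^ (M - k) * ((ρ + 1 + k).choose k : ℚ) * ((s + M).choose (M - k)) else 0 := by
  simp only [W, finsetSum_coeff, coeff_C_mul_X_pow]
  split_ifs with hk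
  · rw [Finset.sum_eq_single (M - k), if_pos (by omega), Nat.sub_sub_self hk,
      show ρ + M + 1 - (M - k) = ρ + 1 + k by omega]
    · intro j hj hjk
      rw [if_neg (by rw [mem_range] at hj; omega)]
    · intro h; exact absurd (mem_range.mpr (by omega)) h
  · exact Finset.sum_eq_zero fun j _ => if_neg (by omega)

lemma coeff_W_self_ne_zero (ρ M s : ℕ) : (W ρ M s).coeff M ≠ 0 := by
  rw [coeff_W, if_pos le_rfl, Nat.sub_self, pow_zero, Nat.choose_zero_right]
  norm_num
  exact Nat.choose_ne_zero (by omega)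

lemma natDegree_W (ρ M s : ℕ) : (W ρ M s).natDegree = M :=
  natDegree_eq_of_le_of_coeff_ne_zero (natDegree_le_iff_coeff_eq_zero.mpr fun k hk => by
    rw [coeff_W, if_neg (by exact_mod_cast hk.not_ge)]) (coeff_W_self_ne_zero ρ M s)

lemma euler_W (ρ M : ℕ) :
    euler ((ρ : ℚ) + 2) (W ρ M (ρ + 2))
      = C (((ρ : ℚ) + 2) * (ρ + 2 + M).choose M) * (X - 1) ^ M := by
  ext k
  rw [euler, coeff_add, coeff_X_mul_derivative, coeff_C_mul, coeff_C_mul, coeff_W, sub_eq_add_neg,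
    ← C_1, ← C_neg, coeff_X_add_C_pow]
  split_ifs with hk
  · have h := Nat.add_one_mul_choose_mul_choose (ρ + 1) k M hk
    rw [show ρ + 1 + 1 = ρ + 2 by omega] at h
    have hq : ((k : ℚ) + ρ + 2) * (ρ + 1 + k).choose k * (ρ + 2 + M).choose (M - k)
        = (ρ + 2) * ((ρ + 2 + M).choose M * M.choose k) := by exact_mod_cast h
    linear_combination (-1) ^ (M - k) * hq
  · rw [Nat.choose_eq_zero_of_lt (by omega : M < k)]
    simp

lemma eval_one_W_ne_zero (ρ M : ℕ) : (W ρ M (ρ + 2)).eval 1 ≠ 0 := by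
  refine eval_one_ne_zero_of_X_sub_one_pow_dvd_euler (b := (ρ : ℚ) + 2)
    (fun h => coeff_W_self_ne_zero ρ M _ (by rw [h, coeff_zero])) ?_
  rw [euler_W, natDegree_W]
  exact dvd_mul_left _ _

structure IsTodaSeq (c : ℕ → ℚ) (τ : ℕ → ℚ[X]) : Prop where
  ne_zero : ∀ n, 1 ≤ n → τ n ≠ 0
  one : τ 1 = 1
  recurrence : ∀ n, 2 ≤ n → τ (n + 1) * τ (n - 1) = todaRhs (c n) (τ n)

namespace IsTodaSeq

variable {M : ℕ} {c : ℕ → ℚ} {τ : ℕ → ℚ[X]}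

lemma natDegree_succ (h : IsTodaSeq c τ) (hc : ∀ n, 2 ≤ n → 0 < c n)
    (hdeg : (τ 2).natDegree = M) (n : ℕ) : (τ (n + 1)).natDegree = M * n := by
  suffices ∀ n, (τ (n + 1)).natDegree = M * n ∧ (τ (n + 2)).natDegree = M * (n + 1) from
    (this n).1
  intro n
  induction n with
  | zero => simp [h.one, hdeg]
  | succ n ih =>
    refine ⟨ih.2, ?_⟩
    have hc' := hc (n + 2) (by omega)
    have hprod := congrArg natDegree (h.recurrence (n + 2) (by omega))
    rw [natDegree_mul (h.ne_zero _ (by omega)) (h.ne_zero _ (by omega)),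
      todaRhs.natDegree_eq _ (h.ne_zero _ (by omega)) (by positivity), ih.2,
      show n + 2 - 1 = n + 1 by omega, ih.1] at hprod
    rw [show n + 1 + 2 = n + 3 by omega]
    linarith [hprod]

lemma mul_le_rootMultiplicity (h : IsTodaSeq c τ) (heval : (τ 2).eval 1 ≠ 0)
    (hdvd : (X - 1) ^ M ∣ todaRhs (c 2) (τ 2)) (n : ℕ) :
    M * n ≤ (τ (n + 2)).rootMultiplicity 1 := by
  set a : ℕ → ℕ := fun n => (τ (n + 2)).rootMultiplicity 1
  have ha0 : a 0 = 0 := rootMultiplicity_eq_zero heval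
  have ha1 : M ≤ a 1 := by
    have h3 := h.recurrence 2 le_rfl
    rw [h.one, mul_one] at h3
    exact (X_sub_one_pow_dvd_iff (h.ne_zero 3 (by omega)) M).mp (h3 ▸ hdvd)
  have hconv : ∀ n, 2 * a (n + 1) ≤ a (n + 2) + a n := by
    intro n
    have hne : τ (n + 4) * τ (n + 2) ≠ 0 :=
      mul_ne_zero (h.ne_zero _ (by omega)) (h.ne_zero _ (by omega))
    have hdvd' : (X - 1) ^ (2 * a (n + 1)) ∣ τ (n + 4) * τ (n + 2) := by
      have := h.recurrence (n + 3) (by omega)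
      rw [show n + 3 - 1 = n + 2 by omega] at this
      rw [this]
      exact todaRhs.pow_two_mul_dvd _
        ((X_sub_one_pow_dvd_iff (h.ne_zero _ (by omega)) _).mpr le_rfl)
    rwa [X_sub_one_pow_dvd_iff hne, rootMultiplicity_mul hne] at hdvd'
  simpa [ha0] using Nat.add_mul_le_of_two_mul_le_add (by omega) hconv n

theorem exists_eq_X_sub_one_pow_mul (h : IsTodaSeq c τ) (hc : ∀ n, 2 ≤ n → 0 < c n)
    (hdeg : (τ 2).natDegree = M) (heval : (τ 2).eval 1 ≠ 0)
    (hdvd : (X - 1) ^ M ∣ todaRhs (c 2) (τ 2)) (n : ℕ) (hn : 2 ≤ n) :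
    ∃ V, τ n = (X - 1) ^ (M * (n - 2)) * V ∧ V.natDegree = M := by
  obtain ⟨k, rfl⟩ := Nat.exists_eq_add_of_le' hn
  have hτ := h.ne_zero (k + 2) (by omega)
  obtain ⟨V, hV⟩ := (X_sub_one_pow_dvd_iff hτ _).mpr (h.mul_le_rootMultiplicity heval hdvd k)
  refine ⟨V, by rw [hV, Nat.add_sub_cancel], ?_⟩
  have hV0 : V ≠ 0 := by rintro rfl; exact hτ (by rw [hV, mul_zero])
  have hd := h.natDegree_succ hc hdeg (k + 1)
  have hX1 : (X - 1 : ℚ[X]) ≠ 0 := X_sub_C_ne_zero 1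
  rw [hV, natDegree_mul (pow_ne_zero _ hX1) hV0, natDegree_pow, natDegree_X_sub_one, mul_one,
    Nat.mul_succ] at hd
  omega

theorem exists_eq_X_sub_one_pow_mul_of_eq_W {ρ : ℕ} (h : IsTodaSeq c τ)
    (hc : ∀ n, 2 ≤ n → 0 < c n) (h2 : τ 2 = W ρ M (ρ + 2)) (hc2 : c 2 = ρ + 2) (n : ℕ)
    (hn : 2 ≤ n) : ∃ V, τ n = (X - 1) ^ (M * (n - 2)) * V ∧ V.natDegree = M :=
  h.exists_eq_X_sub_one_pow_mul hc (h2 ▸ natDegree_W ρ M _) (h2 ▸ eval_one_W_ne_zero ρ M)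
    (by rw [h2, hc2]; exact X_sub_one_pow_dvd_todaRhs (euler_W ρ M)) n hn

end IsTodaSeq

theorem statement13_general (m r : ℕ) (hr : 0 < r)
    (T S : ℕ → Polynomial ℚ)
    (hT0 : ∀ n, 1 ≤ n → T n ≠ 0) (hT1 : T 1 = 1) (hT2 : T 2 = W r m (r + 2))
    (hTrec : ∀ n, 2 ≤ n →
      T (n + 1) * T (n - 1)
        = (X ^ 2 - X) * (T n * derivative (derivative (T n)) - (derivative (T n)) ^ 2)
          + (2 * X - 1) * (T n * derivative (T n))
          + C (((n : ℚ) - 1) * ((n : ℚ) + (r : ℚ))) * (T n) ^ 2)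
    (hS0 : ∀ n, 1 ≤ n → S n ≠ 0) (hS1 : S 1 = 1) (hS2 : S 2 = W (r - 1) (m + 1) (r + 1))
    (hSrec : ∀ n, 2 ≤ n →
      S (n + 1) * S (n - 1)
        = (X ^ 2 - X) * (S n * derivative (derivative (S n)) - (derivative (S n)) ^ 2)
          + (2 * X - 1) * (S n * derivative (S n))
          + C (((n : ℚ) - 1) * ((n : ℚ) + (r : ℚ) - 1)) * (S n) ^ 2) :
    ∀ n, 2 ≤ n →
      (∃ U : Polynomial ℚ, T n = (X - 1) ^ (m * (n - 2)) * U ∧ U.natDegree = m) ∧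
      (∃ V : Polynomial ℚ, S n = (X - 1) ^ ((m + 1) * (n - 2)) * V ∧ V.natDegree = m + 1) := by
  obtain ⟨ρ, rfl⟩ : ∃ ρ, r = ρ + 1 := ⟨r - 1, by omega⟩
  rw [Nat.add_sub_cancel] at hS2
  have hpos : ∀ n : ℕ, 2 ≤ n → (1 : ℚ) ≤ n - 1 := fun n hn => by
    have : (2 : ℚ) ≤ n := by exact_mod_cast hn
    linarith
  intro n hn
  refine ⟨IsTodaSeq.exists_eq_X_sub_one_pow_mul_of_eq_W ⟨hT0, hT1, hTrec⟩ ?_ hT2 ?_ n hn,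
    IsTodaSeq.exists_eq_X_sub_one_pow_mul_of_eq_W ⟨hS0, hS1, hSrec⟩ ?_ hS2 ?_ n hn⟩
  · intro k hk
    have := hpos k hk
    positivity
  · norm_num
    ring
  · intro k hk
    have := hpos k hk
    push_cast
    nlinarith
  · norm_num
    ring

/-- For `s = r + 2`, the polynomials `Tₙ` and `Sₙ` factor as
`Tₙ = (t−1)^{m(n−2)}·Ťₙ` with `deg Ťₙ = m` and `Sₙ = (t−1)^{(m+1)(n−2)}·Šₙ`
with `deg Šₙ = m + 1`. -/
theorem statement13 (m r : ℕ) (hm : 0 < m) (hr : 0 < r)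
    (T S : ℕ → Polynomial ℚ)
    (hT0 : ∀ n, 1 ≤ n → T n ≠ 0) (hT1 : T 1 = 1) (hT2 : T 2 = W r m (r + 2))
    (hTrec : ∀ n, 2 ≤ n →
      T (n + 1) * T (n - 1)
        = (X ^ 2 - X) * (T n * derivative (derivative (T n)) - (derivative (T n)) ^ 2)
          + (2 * X - 1) * (T n * derivative (T n))
          + C (((n : ℚ) - 1) * ((n : ℚ) + (r : ℚ))) * (T n) ^ 2)
    (hS0 : ∀ n, 1 ≤ n → S n ≠ 0) (hS1 : S 1 = 1) (hS2 : S 2 = W (r - 1) (m + 1) (r + 1))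
    (hSrec : ∀ n, 2 ≤ n →
      S (n + 1) * S (n - 1)
        = (X ^ 2 - X) * (S n * derivative (derivative (S n)) - (derivative (S n)) ^ 2)
          + (2 * X - 1) * (S n * derivative (S n))
          + C (((n : ℚ) - 1) * ((n : ℚ) + (r : ℚ) - 1)) * (S n) ^ 2) :
    ∀ n, 2 ≤ n →
      (∃ U : Polynomial ℚ, T n = (X - 1) ^ (m * (n - 2)) * U ∧ U.natDegree = m) ∧
      (∃ V : Polynomial ℚ, S n = (X - 1) ^ ((m + 1) * (n - 2)) * V ∧ V.natDegree = m + 1) :=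
  statement13_general m r hr T S hT0 hT1 hT2 hTrec hS0 hS1 hS2 hSrec
end
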